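/- Let V be an r-dimensional subspace of Euclidean R^d and W a (d−r)-dimensional subspace with ∠(V,W) > 0 (i.e. V ∩ W = {0}). Then for any r-dimensional subspace V' with d_H(V,V') < ∠(V,W)/(2r), one has V' ∩ W = {0}. In particular, the set of r-dimensional subspaces meeting W trivially is open in Gr(r,d). -/

import Mathlib

open scoped RealInnerProductSpace

noncomputable section

abbrev Euc (d : ℕ) := EuclideanSpace ℝ (Fin d)

/-- Norm of the wedge product of a family of vectors (square root of Gram determinant). -/
def wnorm {d : ℕ} {ι : Type*} [Fintype ι] [DecidableEq ι] (x : ι → Euc d) : ℝ :=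
  Real.sqrt (Matrix.of fun i j => ⟪x i, x j⟫).det

/-- `d_H(V, V') = sup` over unit vectors `v ∈ V` of `dist(v, V')`. -/
def dH {d : ℕ} (V V' : Submodule ℝ (Euc d)) : ℝ :=
  sSup {c | ∃ v ∈ V, ‖v‖ = 1 ∧ c = Metric.infDist v (V' : Set (Euc d))}

/-! Replace the basis `v` of `V` by its Gram–Schmidt orthonormalisation `e`; then
`∠(V, W) = ‖e ∧ w‖ / ‖w‖`. The wedge norm is, in each slot, the distance of that vector to the span
of the others times the wedge norm of the others, so it is a seminorm in each slot, and by
Hadamard's inequality it is at most `1` on vectors of norm at most `1`. Swapping each `e i` for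
its projection `p i` onto `V'`, at distance at most `ε = d_H(V, V')`, one slot at a time gives
`‖e ∧ w‖ ≤ ‖p ∧ w‖ + r ε ‖w‖`. If `V' ∩ W ≠ 0`, the `r + (d - r)` vectors `p, w` lie in
`V' + W`, of dimension `< r + (d - r)`, so `‖p ∧ w‖ = 0` and `∠(V, W) ≤ r ε`. -/

open Matrix Module Submodule Set InnerProductSpace

lemma Submodule.inf_eq_bot_of_linearIndependent_sumElim {K E ι κ : Type*} [DivisionRing K]
    [AddCommGroup E] [Module K E] [FiniteDimensional K E] [Fintype ι] [Fintype κ]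
    {S T : Submodule K E} {p : ι → E} {w : κ → E} (hp : ∀ i, p i ∈ S) (hw : ∀ j, w j ∈ T)
    (hS : finrank K S ≤ Fintype.card ι) (hT : finrank K T ≤ Fintype.card κ)
    (h : LinearIndependent K (Sum.elim p w)) : S ⊓ T = ⊥ := by
  have hspan : span K (range (Sum.elim p w)) ≤ S ⊔ T :=
    span_le.mpr <| range_subset_iff.mpr <| Sum.rec (fun i => mem_sup_left (hp i))
      (fun j => mem_sup_right (hw j))
  have hsup : Fintype.card ι + Fintype.card κ ≤ finrank K ↥(S ⊔ T) := by
    rw [← Fintype.card_sum, ← finrank_span_eq_card h]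
    exact finrank_mono hspan
  have := finrank_sup_add_finrank_inf_eq S T
  exact finrank_eq_zero.mp (by omega)

section Wedge

variable {d : ℕ} {ι κ : Type*} [Fintype ι] [Fintype κ]

lemma gram_comb (x : ι → Euc d) (A : Matrix ι ι ℝ) :
    gram ℝ (fun i => ∑ j, A j i • x j) = Aᵀ * gram ℝ x * A := by
  ext i k
  simp only [gram_apply, sum_inner, inner_sum, real_inner_smul_left, real_inner_smul_right,
    mul_apply, transpose_apply, Finset.sum_mul]
  exact Finset.sum_congr rfl fun j _ => Finset.sum_congr rfl fun l _ => by ring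

variable [DecidableEq ι] [DecidableEq κ]

lemma wnorm_eq_sqrt_det_gram (x : ι → Euc d) : wnorm x = √(gram ℝ x).det := rfl

lemma wnorm_nonneg (x : ι → Euc d) : 0 ≤ wnorm x := Real.sqrt_nonneg _

lemma wnorm_comp_equiv {ι' : Type*} [Fintype ι'] [DecidableEq ι'] (x : ι → Euc d) (σ : ι' ≃ ι) :
    wnorm (x ∘ σ) = wnorm x := by
  rw [wnorm_eq_sqrt_det_gram, wnorm_eq_sqrt_det_gram, ← det_submatrix_equiv_self σ]
  rfl

lemma wnorm_eq_zero_of_not_linearIndependent {x : ι → Euc d} (h : ¬ LinearIndependent ℝ x) :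
    wnorm x = 0 := by
  rw [wnorm_eq_sqrt_det_gram, not_ne_iff.mp (mt det_gram_ne_zero_iff_linearIndependent.mp h),
    Real.sqrt_zero]

lemma wnorm_pos {x : ι → Euc d} (h : LinearIndependent ℝ x) : 0 < wnorm x :=
  Real.sqrt_pos.mpr (posDef_gram_of_linearIndependent h).det_pos

lemma wnorm_eq_one_of_orthonormal {x : ι → Euc d} (h : Orthonormal ℝ x) : wnorm x = 1 := by
  rw [wnorm_eq_sqrt_det_gram, gram_eq_one_iff_orthonormal.mpr h, det_one, Real.sqrt_one]

lemma wnorm_unique [Unique ι] (x : ι → Euc d) : wnorm x = ‖x default‖ := by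
  rw [wnorm_eq_sqrt_det_gram, det_unique, gram_apply, real_inner_self_eq_norm_sq,
    Real.sqrt_sq (norm_nonneg _)]

lemma wnorm_fin_append {m n : ℕ} (x : Fin m → Euc d) (y : Fin n → Euc d) :
    wnorm (Fin.append x y) = wnorm (Sum.elim x y) := by
  rw [← wnorm_comp_equiv _ finSumFinEquiv, ← Fin.append_comp_sumElim]
  rfl

lemma wnorm_comb (x : ι → Euc d) (A : Matrix ι ι ℝ) :
    wnorm (fun i => ∑ j, A j i • x j) = |A.det| * wnorm x := by
  rw [wnorm_eq_sqrt_det_gram, wnorm_eq_sqrt_det_gram, gram_comb, det_mul, det_mul, det_transpose,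
    mul_right_comm, ← sq, Real.sqrt_mul (sq_nonneg _), Real.sqrt_sq_eq_abs]

lemma wnorm_sumElim_of_orthogonal {u : ι → Euc d} {t : κ → Euc d} (h : ∀ i j, ⟪u i, t j⟫ = 0) :
    wnorm (Sum.elim u t) = wnorm u * wnorm t := by
  have hgram : gram ℝ (Sum.elim u t) = fromBlocks (gram ℝ u) 0 0 (gram ℝ t) := by
    ext (i | i) (j | j) <;> simp [h, real_inner_comm]
  rw [wnorm_eq_sqrt_det_gram, hgram, det_fromBlocks_zero₂₁,
    Real.sqrt_mul (posSemidef_gram ℝ u).det_nonneg]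
  rfl

lemma wnorm_sumElim_comb (u : ι → Euc d) (t : κ → Euc d) (C : Matrix ι ι ℝ) {h : ι → Euc d}
    (hh : ∀ i, h i ∈ span ℝ (range t)) :
    wnorm (Sum.elim (fun i => ∑ j, C j i • u j + h i) t) = |C.det| * wnorm (Sum.elim u t) := by
  choose D hD using fun i => (mem_span_range_iff_exists_fun ℝ).mp (hh i)
  have hcomb : Sum.elim (fun i => ∑ j, C j i • u j + h i) t =
      fun i => ∑ j, fromBlocks C 0 (of fun k i => D i k) 1 j i • Sum.elim u t j := by
    funext i
    rcases i with i | k <;> simp [Fintype.sum_sum_type, ← hD, one_apply]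
  rw [hcomb, wnorm_comb, det_fromBlocks_zero₁₂, det_one, mul_one]

lemma wnorm_sumElim (u : ι → Euc d) (t : κ → Euc d) :
    wnorm (Sum.elim u t) =
      wnorm (fun i => (span ℝ (range t))ᗮ.starProjection (u i)) * wnorm t := by
  set K := span ℝ (range t)
  have hproj : (fun i => Kᗮ.starProjection (u i)) =
      fun i => ∑ j, (1 : Matrix ι ι ℝ) j i • u j + -K.starProjection (u i) := by
    funext i
    simp [one_apply, sub_eq_add_neg]
  rw [← wnorm_sumElim_of_orthogonal, hproj,
    wnorm_sumElim_comb _ _ _ fun i => K.neg_mem (K.starProjection_apply_mem _), det_one, abs_one,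
    one_mul]
  intro i j
  exact inner_left_of_mem_orthogonal (subset_span (mem_range_self j)) (starProjection_apply_mem _ _)

lemma wnorm_fin_cons_eq_sumElim {n : ℕ} (a : Euc d) (x : Fin n → Euc d) :
    wnorm (Fin.cons a x : Fin (n + 1) → Euc d) = wnorm (Sum.elim (fun _ : Unit => a) x) := by
  rw [← wnorm_comp_equiv _ ((finSuccEquiv n).trans
    ((Equiv.optionEquivSumPUnit (Fin n)).trans (Equiv.sumComm _ _)))]
  congr 1
  funext i
  exact Fin.cases rfl (fun i => rfl) i

lemma wnorm_fin_cons {n : ℕ} (a : Euc d) (x : Fin n → Euc d) :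
    wnorm (Fin.cons a x : Fin (n + 1) → Euc d) =
      ‖(span ℝ (range x))ᗮ.starProjection a‖ * wnorm x := by
  rw [wnorm_fin_cons_eq_sumElim, wnorm_sumElim, wnorm_unique]

lemma wnorm_fin_cons_eq_mul_norm {n : ℕ} (a : Euc d) (x : Fin n → Euc d) :
    wnorm (Fin.cons a x : Fin (n + 1) → Euc d) =
      wnorm (fun i => (ℝ ∙ a)ᗮ.starProjection (x i)) * ‖a‖ := by
  rw [wnorm_fin_cons_eq_sumElim, ← wnorm_comp_equiv _ (Equiv.sumComm _ _)]
  change wnorm (Sum.elim _ _ ∘ Sum.swap) = _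
  rw [Sum.elim_swap, wnorm_sumElim, wnorm_unique (fun _ : Unit => a), range_const]

lemma wnorm_le_prod_norm : ∀ {n : ℕ} (x : Fin n → Euc d), wnorm x ≤ ∏ i, ‖x i‖
  | 0, x => by simp [wnorm_eq_sqrt_det_gram]
  | n + 1, x => by
    rw [← Fin.cons_self_tail x, wnorm_fin_cons, Fin.prod_univ_succ]
    simp only [Fin.cons_zero, Fin.cons_succ]
    exact mul_le_mul (norm_starProjection_apply_le _ _) (wnorm_le_prod_norm _) (wnorm_nonneg _)
      (norm_nonneg _)

lemma wnorm_le_add_of_norm_sub_le {ε : ℝ} : ∀ {n : ℕ} (x y : Fin n → Euc d), (∀ i, ‖x i‖ ≤ 1) →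
    (∀ i, ‖y i‖ ≤ 1) → (∀ i, ‖x i - y i‖ ≤ ε) → wnorm x ≤ wnorm y + n * ε
  | 0, x, y, _, _, _ => by simp [Subsingleton.elim x y]
  | n + 1, x, y, hx, hy, hxy => by
    set P := (span ℝ (range (Fin.tail x)))ᗮ.starProjection
    set L := (ℝ ∙ y 0)ᗮ.starProjection
    have hε : 0 ≤ ε := (norm_nonneg _).trans (hxy 0)
    have htail : wnorm (Fin.tail x) ≤ 1 :=
      (wnorm_le_prod_norm _).trans <|
        Finset.prod_le_one (fun _ _ => norm_nonneg _) fun i _ => hx i.succ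
    have hslot : ‖P (x 0)‖ ≤ ‖P (y 0)‖ + ε := by
      calc ‖P (x 0)‖ ≤ ‖P (y 0)‖ + ‖P (x 0 - y 0)‖ := by
            rw [map_sub]; exact norm_le_insert' _ _
        _ ≤ ‖P (y 0)‖ + ε := by gcongr; exact (norm_starProjection_apply_le _ _).trans (hxy 0)
    have hrest := wnorm_le_add_of_norm_sub_le (fun i => L (Fin.tail x i))
      (fun i => L (Fin.tail y i))
      (fun i => (norm_starProjection_apply_le _ _).trans (hx i.succ))
      (fun i => (norm_starProjection_apply_le _ _).trans (hy i.succ))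
      (fun i => by rw [← map_sub]; exact (norm_starProjection_apply_le _ _).trans (hxy i.succ))
    calc wnorm x = ‖P (x 0)‖ * wnorm (Fin.tail x) := by
          conv_lhs => rw [← Fin.cons_self_tail x]
          rw [wnorm_fin_cons]
      _ ≤ ‖P (y 0)‖ * wnorm (Fin.tail x) + ε := by
          nlinarith [norm_nonneg (P (y 0)), wnorm_nonneg (Fin.tail x)]
      _ = wnorm (fun i => L (Fin.tail x i)) * ‖y 0‖ + ε := by
          rw [← wnorm_fin_cons, wnorm_fin_cons_eq_mul_norm]
      _ ≤ (wnorm (fun i => L (Fin.tail y i)) + n * ε) * ‖y 0‖ + ε := by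
          gcongr
      _ ≤ wnorm y + (n + 1 : ℕ) * ε := by
          conv_rhs => rw [← Fin.cons_self_tail y, wnorm_fin_cons_eq_mul_norm]
          push_cast
          nlinarith [hy 0, mul_nonneg (Nat.cast_nonneg n) hε]

lemma wnorm_sumElim_le_add_of_norm_sub_le {ε : ℝ} {n : ℕ} (x y : Fin n → Euc d) (t : κ → Euc d)
    (hx : ∀ i, ‖x i‖ ≤ 1) (hy : ∀ i, ‖y i‖ ≤ 1) (hxy : ∀ i, ‖x i - y i‖ ≤ ε) :
    wnorm (Sum.elim x t) ≤ wnorm (Sum.elim y t) + n * ε * wnorm t := by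
  set P := (span ℝ (range t))ᗮ.starProjection
  have h := wnorm_le_add_of_norm_sub_le (fun i => P (x i)) (fun i => P (y i))
    (fun i => (norm_starProjection_apply_le _ _).trans (hx i))
    (fun i => (norm_starProjection_apply_le _ _).trans (hy i))
    (fun i => by rw [← map_sub]; exact (norm_starProjection_apply_le _ _).trans (hxy i))
  rw [wnorm_sumElim, wnorm_sumElim]
  calc wnorm (fun i => P (x i)) * wnorm t ≤ (wnorm (fun i => P (y i)) + n * ε) * wnorm t :=
        mul_le_mul_of_nonneg_right h (wnorm_nonneg t)
    _ = wnorm (fun i => P (y i)) * wnorm t + n * ε * wnorm t := by ring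

lemma wnorm_sumElim_div_eq_of_mem_span {u u' : ι → Euc d} (t : κ → Euc d)
    (hu : LinearIndependent ℝ u) (hspan : ∀ i, u i ∈ span ℝ (range u')) :
    wnorm (Sum.elim u t) / (wnorm u * wnorm t) = wnorm (Sum.elim u' t) / (wnorm u' * wnorm t) := by
  choose C hC using fun i => (mem_span_range_iff_exists_fun ℝ).mp (hspan i)
  have hu_eq : u = fun i => ∑ j, (of fun j i => C i j) j i • u' j := funext fun i => (hC i).symm
  have hcomb := wnorm_sumElim_comb u' t (of fun j i => C i j) (h := 0) fun _ => zero_mem _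
  simp only [Pi.zero_apply, add_zero, ← hu_eq] at hcomb
  have hwu : wnorm u = |(of fun j i => C i j).det| * wnorm u' := by rw [hu_eq, wnorm_comb]
  have hdet : |(of fun j i => C i j).det| ≠ 0 := fun h0 =>
    (wnorm_pos hu).ne' (by rw [hwu, h0, zero_mul])
  rw [hcomb, hwu, mul_assoc, mul_div_mul_left _ _ hdet]

end Wedge

lemma dH_nonneg {d : ℕ} (V V' : Submodule ℝ (Euc d)) : 0 ≤ dH V V' :=
  Real.sSup_nonneg <| by
    rintro _ ⟨v, -, -, rfl⟩
    exact Metric.infDist_nonneg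

lemma norm_sub_starProjection_le_dH {d : ℕ} {V V' : Submodule ℝ (Euc d)} {x : Euc d} (hx : x ∈ V)
    (hx1 : ‖x‖ = 1) : ‖x - V'.starProjection x‖ ≤ dH V V' := by
  have hdist : ‖x - V'.starProjection x‖ = Metric.infDist x V' := by
    rw [starProjection_minimal, Metric.infDist_eq_iInf]
    simp [dist_eq_norm]
  refine le_csSup ⟨1, ?_⟩ ⟨x, hx, hx1, hdist⟩
  rintro _ ⟨v, -, hv1, rfl⟩
  calc Metric.infDist v V' ≤ dist v 0 := Metric.infDist_le_dist_of_mem (zero_mem V')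
    _ = 1 := by rw [dist_zero_right, hv1]

lemma wnorm_sumElim_le_of_inf_ne_bot {d n : ℕ} {κ : Type*} [Fintype κ] [DecidableEq κ]
    {V V' W : Submodule ℝ (Euc d)} {e : Fin n → Euc d} {w : κ → Euc d}
    (heV : ∀ i, e i ∈ V) (he : ∀ i, ‖e i‖ = 1) (hw : ∀ j, w j ∈ W)
    (hV' : finrank ℝ V' ≤ n) (hW : finrank ℝ W ≤ Fintype.card κ) (hne : V' ⊓ W ≠ ⊥) :
    wnorm (Sum.elim e w) ≤ n * dH V V' * wnorm w := by
  have hdep : wnorm (Sum.elim (fun i => V'.starProjection (e i)) w) = 0 :=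
    wnorm_eq_zero_of_not_linearIndependent fun h => hne <|
      inf_eq_bot_of_linearIndependent_sumElim (fun i => V'.starProjection_apply_mem _) hw
        (hV'.trans_eq (Fintype.card_fin n).symm) hW h
  simpa [hdep] using wnorm_sumElim_le_add_of_norm_sub_le e (fun i => V'.starProjection (e i)) w
    (fun i => (he i).le)
    (fun i => (norm_starProjection_apply_le _ _).trans (he i).le)
    (fun i => norm_sub_starProjection_le_dH (heV i) (he i))

theorem stmt11_general {d r : ℕ} (V V' W : Submodule ℝ (Euc d))
    (v v' : Fin r → Euc d) (w : Fin (d - r) → Euc d)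
    (hv : LinearIndependent ℝ v)
    (hvV : Submodule.span ℝ (Set.range v) = V)
    (hv'V' : Submodule.span ℝ (Set.range v') = V')
    (hwW : Submodule.span ℝ (Set.range w) = W)
    (hclose : dH V V' < (wnorm (Fin.append v w) / (wnorm v * wnorm w)) / (2 * r)) :
    V' ⊓ W = ⊥ := by
  by_contra hne
  set e := gramSchmidtNormed ℝ v
  have he : Orthonormal ℝ e := gramSchmidtNormed_orthonormal hv
  have hspan : span ℝ (range e) = span ℝ (range v) :=
    (span_gramSchmidtNormed_range v).trans (span_gramSchmidt ℝ v)
  have hε : 0 ≤ dH V V' := dH_nonneg V V'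
  have hangle : wnorm (Fin.append v w) / (wnorm v * wnorm w) ≤ r * dH V V' := by
    rw [wnorm_fin_append, wnorm_sumElim_div_eq_of_mem_span (u' := e) w hv
      (fun i => hspan ▸ subset_span (mem_range_self i)), wnorm_eq_one_of_orthonormal he, one_mul]
    refine div_le_of_le_mul₀ (wnorm_nonneg w) (mul_nonneg r.cast_nonneg hε) ?_
    exact wnorm_sumElim_le_of_inf_ne_bot (fun i => hvV ▸ hspan ▸ subset_span (mem_range_self i))
      he.1 (fun j => hwW ▸ subset_span (mem_range_self j))
      (hv'V' ▸ (finrank_range_le_card v').trans_eq (Fintype.card_fin r))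
      (hwW ▸ finrank_range_le_card w) hne
  -- no case split on `r`: for `r = 0` the left side is the junk value `x / 0 = 0`
  have : wnorm (Fin.append v w) / (wnorm v * wnorm w) / (2 * r) ≤ dH V V' :=
    div_le_of_le_mul₀ (by positivity) hε (by nlinarith)
  linarith

theorem stmt11 {d r : ℕ} (hrd : r ≤ d) (V V' W : Submodule ℝ (Euc d))
    (v v' : Fin r → Euc d) (w : Fin (d - r) → Euc d)
    (hv : LinearIndependent ℝ v) (hv' : LinearIndependent ℝ v') (hw : LinearIndependent ℝ w)
    (hvV : Submodule.span ℝ (Set.range v) = V)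
    (hv'V' : Submodule.span ℝ (Set.range v') = V')
    (hwW : Submodule.span ℝ (Set.range w) = W)
    -- `∠(V, W) > 0`, i.e. `V ∩ W = {0}`
    (hang : 0 < wnorm (Fin.append v w) / (wnorm v * wnorm w))
    (hclose : dH V V' < (wnorm (Fin.append v w) / (wnorm v * wnorm w)) / (2 * r)) :
    V' ⊓ W = ⊥ :=
  stmt11_general V V' W v v' w hv hvV hv'V' hwW hclose
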